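/- Let α > 0, β > 0, T > 0 and 0 < γ < 1, set c = e^{−αT}, and assume c < γ. Let P : [0, β] → [0, β] be the map P(x) = γ·β·x / (x + (β − x)·c) and let x* = β·(γ − c)/(1 − c). Then for every initial value x₀ with 0 < x₀ ≤ β, the sequence of iterates x_{n+1} = P(x_n) converges to x* as n → ∞. In particular, the logistic dynamics with periodic resetting stabilize at the level x*, which differs from both equilibria 0 and β of the logistic equation without resetting. -/

import Mathlib

/-! In the reciprocal variable `y = 1/x` the Poincaré map becomes affine,
`y ↦ (c/γ)·y + (1 - c)/(γβ)`, a contraction because `c < γ`; so `1/xₙ` converges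
geometrically to its fixed point `(1 - c)/(β(γ - c)) = 1/x*`. -/

open Filter Topology

theorem tendsto_of_eq_mul_add {y : ℕ → ℝ} {r b : ℝ} (hr : |r| < 1)
    (hy : ∀ n, y (n + 1) = r * y n + b) :
    Tendsto y atTop (𝓝 (b / (1 - r))) := by
  set u := b / (1 - r) with hu_def
  have hu : u = r * u + b := by
    have : 1 - r ≠ 0 := by linarith [le_abs_self r]
    rw [hu_def]
    field_simp
    ring
  have hgeom : ∀ n, y n = r ^ n * (y 0 - u) + u := by
    intro n
    induction n with
    | zero => simp
    | succ n ih => rw [hy, ih, pow_succ]; linear_combination -hu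
  have hlim : Tendsto (fun n ↦ r ^ n * (y 0 - u) + u) atTop (𝓝 (0 * (y 0 - u) + u)) :=
    ((tendsto_pow_atTop_nhds_zero_of_abs_lt_one hr).mul_const _).add_const u
  rw [zero_mul, zero_add] at hlim
  simpa only [← hgeom] using hlim

theorem mul_sub_div_one_sub_mem_Ioo {β γ c : ℝ} (hβ : 0 < β) (hcγ : c < γ) (hγ : γ < 1) :
    β * (γ - c) / (1 - c) ∈ Set.Ioo 0 β := by
  have h1c : 0 < 1 - c := by linarith
  refine ⟨by have := sub_pos.2 hcγ; positivity, (div_lt_iff₀ h1c).2 ?_⟩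
  nlinarith

noncomputable def logisticPoincareMap (γ β c x : ℝ) : ℝ :=
  γ * β * x / (x + (β - x) * c)

theorem inv_logisticPoincareMap {γ β c x : ℝ} (hγ : γ ≠ 0) (hβ : β ≠ 0) (hx : x ≠ 0) :
    (logisticPoincareMap γ β c x)⁻¹ = c / γ * x⁻¹ + (1 - c) / (γ * β) := by
  rw [logisticPoincareMap, inv_div]
  field_simp
  ring

theorem logisticPoincareMap_pos {γ β c x : ℝ} (hγ : 0 < γ) (hβ : 0 < β) (hc0 : 0 ≤ c)
    (hc1 : c ≤ 1) (hx : 0 < x) : 0 < logisticPoincareMap γ β c x := by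
  have hden : 0 < x + (β - x) * c := by
    rcases hc0.eq_or_lt with rfl | hc0
    · simpa using hx
    · nlinarith
  unfold logisticPoincareMap
  positivity

theorem tendsto_logisticPoincareMap_orbit {γ β c : ℝ} {x : ℕ → ℝ} (hβ : 0 < β)
    (hc : 0 < c) (hcγ : c < γ) (hγ : γ < 1) (hx0 : 0 < x 0)
    (hrec : ∀ n, x (n + 1) = logisticPoincareMap γ β c (x n)) :
    Tendsto x atTop (𝓝 (β * (γ - c) / (1 - c))) := by
  have hγ0 : 0 < γ := hc.trans hcγ
  have hpos : ∀ n, 0 < x n := by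
    intro n
    induction n with
    | zero => exact hx0
    | succ n ih => exact hrec n ▸ logisticPoincareMap_pos hγ0 hβ hc.le (by linarith) ih
  have hinv : ∀ n, (x (n + 1))⁻¹ = c / γ * (x n)⁻¹ + (1 - c) / (γ * β) := fun n ↦ by
    rw [hrec, inv_logisticPoincareMap hγ0.ne' hβ.ne' (hpos n).ne']
  have hratio : |c / γ| < 1 := by
    rw [abs_of_pos (div_pos hc hγ0), div_lt_one hγ0]
    exact hcγ
  have hfix : (1 - c) / (γ * β) / (1 - c / γ) = (β * (γ - c) / (1 - c))⁻¹ := by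
    have : γ - c ≠ 0 := by linarith
    have : 1 - c ≠ 0 := by linarith
    field_simp
  have hlim := tendsto_of_eq_mul_add (y := fun n ↦ (x n)⁻¹) hratio hinv
  rw [hfix] at hlim
  have hfix_ne : (β * (γ - c) / (1 - c))⁻¹ ≠ 0 :=
    inv_ne_zero (mul_sub_div_one_sub_mem_Ioo hβ hcγ hγ).1.ne'
  simpa only [inv_inv] using hlim.inv₀ hfix_ne

theorem logistic_resetting_stabilizes_general (α β T γ c : ℝ)
    (hβ : 0 < β) (hγ1 : γ < 1)
    (hc : c = Real.exp (-α * T)) (hcγ : c < γ)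
    (P : ℝ → ℝ) (hP : ∀ x : ℝ, P x = γ * β * x / (x + (β - x) * c))
    (x : ℕ → ℝ) (hx0 : 0 < x 0)
    (hrec : ∀ n : ℕ, x (n + 1) = P (x n)) :
    Filter.Tendsto x Filter.atTop (nhds (β * (γ - c) / (1 - c))) ∧
    β * (γ - c) / (1 - c) ≠ 0 ∧ β * (γ - c) / (1 - c) ≠ β := by
  have hc0 : 0 < c := hc ▸ Real.exp_pos _
  obtain ⟨hfix_pos, hfix_lt⟩ := mul_sub_div_one_sub_mem_Ioo hβ hcγ hγ1
  exact ⟨tendsto_logisticPoincareMap_orbit hβ hc0 hcγ hγ1 hx0 fun n ↦ (hrec n).trans (hP _),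
    hfix_pos.ne', hfix_lt.ne⟩

/-- With `c = e^{−αT} < γ` and
`P(x) = γ·β·x / (x + (β − x)·c)`, for every initial value `x₀ ∈ (0, β]` the
iterates `x_{n+1} = P(x_n)` converge to `x* = β·(γ − c)/(1 − c)`, which differs
from both equilibria `0` and `β` of the logistic equation without resetting. -/
theorem logistic_resetting_stabilizes (α β T γ c : ℝ)
    (hα : 0 < α) (hβ : 0 < β) (hT : 0 < T) (hγ0 : 0 < γ) (hγ1 : γ < 1)
    (hc : c = Real.exp (-α * T)) (hcγ : c < γ)
    (P : ℝ → ℝ) (hP : ∀ x : ℝ, P x = γ * β * x / (x + (β - x) * c))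
    (x : ℕ → ℝ) (hx0 : 0 < x 0) (hx0' : x 0 ≤ β)
    (hrec : ∀ n : ℕ, x (n + 1) = P (x n)) :
    Filter.Tendsto x Filter.atTop (nhds (β * (γ - c) / (1 - c))) ∧
    β * (γ - c) / (1 - c) ≠ 0 ∧ β * (γ - c) / (1 - c) ≠ β :=
  logistic_resetting_stabilizes_general α β T γ c hβ hγ1 hc hcγ P hP x hx0 hrec
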